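/- arXiv:2206.07021 — 2 statements merged into one kernel-verified Lean document; each statement's English description precedes it below -/
import Mathlib

section
/- Inner-product bound for Q-RR without strongly convex summands: Suppose Q is a compression operator with parameter ω > 0, f is μ-strongly convex, each f_m^i is convex and L_max-smooth, and for every collection π of permutations of {1,…,n} and every i the function f^{π,i}(x) = (1/M)Σ_{m=1}^M f_m^{π_m(i)}(x) is L̃-smooth. Then in one epoch of Q-RR with τ = γn and g_t = (1/(Mn))Σ_{i=0}^{n−1}Σ_{m=1}^M Q(∇f_m^{π_m(i)}(x_t^i)), it holds that −2τ E[⟨g_t, x_t − x*⟩] ≤ −(τμ/2)‖x_t − x*‖² − τ(f(x_t) − f(x*)) + (τL̃/n)Σ_{i=0}^{n−1} E[‖x_t^i − x_t‖²], where the expectation is over the compression randomness within the epoch (conditional on x_t and the permutations). -/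
/-!
For each inner step `i`, the averaged summand `f^{π,i}` is convex and `L̃`-smooth, so the descent
lemma at `x_t^i` and the gradient inequality from `x_t^i` towards `x*` give the three-point bound
`f^{π,i}(x_t) − f^{π,i}(x*) ≤ ⟨∇f^{π,i}(x_t^i), x_t − x*⟩ + (L̃/2)‖x_t^i − x_t‖²`.
The iterate `x_t^i` depends only on the seeds of earlier steps, hence is independent of the seeds
of step `i`, and unbiasedness of `Q` gives `E g_t = (1/n) Σ_i E ∇f^{π,i}(x_t^i)`; Lipschitz
gradients and the second-moment bound of `Q` keep every iterate in `L²`, so all these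
expectations are finite. Summing over `i`, the `f^{π,i}` add up to `n f` because each `π_m` is a
bijection, and strong convexity at the minimiser gives `(μ/2)‖x_t − x*‖² ≤ f(x_t) − f(x*)`.
-/

open MeasureTheory ProbabilityTheory Finset

/-- Bregman divergence `D_h(x, y) = h(x) − h(y) − ⟨∇h(y), x − y⟩` of a function `h`
with gradient field `h'`. -/
noncomputable def breg {d : ℕ} (h : EuclideanSpace ℝ (Fin d) → ℝ)
    (h' : EuclideanSpace ℝ (Fin d) → EuclideanSpace ℝ (Fin d))
    (x y : EuclideanSpace ℝ (Fin d)) : ℝ :=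
  h x - h y - (inner ℝ (h' y) (x - y) : ℝ)

open scoped RealInnerProductSpace

section SmoothConvex

variable {E : Type*} [NormedAddCommGroup E] [InnerProductSpace ℝ E] [CompleteSpace E]
  {h : E → ℝ} {h' : E → E}

lemma HasGradientAt.hasDerivAt_comp_add_smul {x v u : E} {t : ℝ}
    (hgrad : HasGradientAt h u (x + t • v)) :
    HasDerivAt (fun s : ℝ => h (x + s • v)) ⟪u, v⟫ t := by
  have hline : HasDerivAt (fun s : ℝ => x + s • v) v t := by
    simpa using ((hasDerivAt_id t).smul_const v).const_add x
  have := hgrad.hasFDerivAt.comp_hasDerivAt t hline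
  simp only [InnerProductSpace.toDual_apply_apply] at this
  exact this

lemma ConvexOn.add_inner_gradient_le (hgrad : ∀ x, HasGradientAt h (h' x) x)
    (hconv : ConvexOn ℝ Set.univ h) (x y : E) : h x + ⟪h' x, y - x⟫ ≤ h y := by
  have hline : ConvexOn ℝ Set.univ (fun t : ℝ => h (x + t • (y - x))) := by
    simpa [Function.comp_def, AffineMap.lineMap_apply_module', add_comm] using
      hconv.comp_affineMap (AffineMap.lineMap x y : ℝ →ᵃ[ℝ] E)
  have hderiv : HasDerivAt (fun t : ℝ => h (x + t • (y - x))) ⟪h' x, y - x⟫ 0 := by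
    simpa using (show HasGradientAt h (h' x) (x + (0 : ℝ) • (y - x)) by
      simpa using hgrad x).hasDerivAt_comp_add_smul
  have := hline.le_slope_of_hasDerivAt (Set.mem_univ _) (Set.mem_univ _) one_pos hderiv
  simp [slope_def_field] at this
  linarith

lemma le_add_inner_gradient_add_sq_of_lipschitz (hgrad : ∀ x, HasGradientAt h (h' x) x)
    {L : ℝ} (hL : ∀ x y, ‖h' x - h' y‖ ≤ L * ‖x - y‖) (x y : E) :
    h y ≤ h x + ⟪h' x, y - x⟫ + L / 2 * ‖y - x‖ ^ 2 := by
  set v := y - x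
  -- The claim is `ψ 1 ≤ ψ 0`, and `ψ' ≤ 0` on `[0, 1]` by the Lipschitz bound on `h'`.
  set ψ : ℝ → ℝ := fun t => h (x + t • v) - t * ⟪h' x, v⟫ - L * t ^ 2 / 2 * ‖v‖ ^ 2
  have hψ : ∀ t, HasDerivAt ψ (⟪h' (x + t • v), v⟫ - ⟪h' x, v⟫ - L * t * ‖v‖ ^ 2) t := by
    intro t
    have hsq : HasDerivAt (fun t : ℝ => L * t ^ 2 / 2 * ‖v‖ ^ 2) (L * t * ‖v‖ ^ 2) t := by
      refine ((((hasDerivAt_pow 2 t).const_mul L).div_const 2).mul_const (‖v‖ ^ 2)).congr_deriv ?_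
      rw [show (2 : ℕ) - 1 = 1 from rfl]; push_cast; ring
    exact (((hgrad _).hasDerivAt_comp_add_smul).sub
      ((hasDerivAt_id t).mul_const _)).sub hsq |>.congr_deriv (by simp)
  have hanti : AntitoneOn ψ (Set.Icc 0 1) := by
    refine antitoneOn_of_deriv_nonpos (convex_Icc 0 1)
      (fun t _ => (hψ t).continuousAt.continuousWithinAt)
      (fun t _ => (hψ t).differentiableAt.differentiableWithinAt) fun t ht => ?_
    rw [interior_Icc] at ht
    have hgap : ⟪h' (x + t • v) - h' x, v⟫ ≤ L * t * ‖v‖ ^ 2 :=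
      calc ⟪h' (x + t • v) - h' x, v⟫ ≤ ‖h' (x + t • v) - h' x‖ * ‖v‖ := real_inner_le_norm _ _
        _ ≤ L * ‖x + t • v - x‖ * ‖v‖ := by gcongr; exact hL _ _
        _ = L * t * ‖v‖ ^ 2 := by
          rw [add_sub_cancel_left, norm_smul, Real.norm_of_nonneg ht.1.le]; ring
    rw [(hψ t).deriv, ← inner_sub_left]
    linarith
  have := hanti (Set.left_mem_Icc.2 zero_le_one) (Set.right_mem_Icc.2 zero_le_one) zero_le_one
  simp only [ψ, zero_smul, add_zero, zero_mul, one_smul, one_pow, mul_one, v,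
    add_sub_cancel] at this
  linarith

lemma ConvexOn.sub_le_inner_gradient_add_sq (hgrad : ∀ x, HasGradientAt h (h' x) x)
    (hconv : ConvexOn ℝ Set.univ h) {L : ℝ} (hL : ∀ x y, ‖h' x - h' y‖ ≤ L * ‖x - y‖)
    (x x' z : E) : h x - h x' ≤ ⟪h' z, x - x'⟫ + L / 2 * ‖z - x‖ ^ 2 := by
  have hdescent := le_add_inner_gradient_add_sq_of_lipschitz hgrad hL z x
  have hsupport := hconv.add_inner_gradient_le hgrad z x'
  have hsplit : ⟪h' z, x - x'⟫ = ⟪h' z, x - z⟫ - ⟪h' z, x' - z⟫ := by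
    rw [← inner_sub_right, sub_sub_sub_cancel_right]
  rw [hsplit, norm_sub_rev]
  linarith

end SmoothConvex

lemma StrongConvexOn.sq_norm_sub_le_of_isMinOn {E : Type*} [NormedAddCommGroup E]
    [NormedSpace ℝ E] {f : E → ℝ} {μ : ℝ} (hsc : StrongConvexOn Set.univ μ f) {x₀ : E}
    (hmin : ∀ y, f x₀ ≤ f y) (x : E) : μ / 2 * ‖x - x₀‖ ^ 2 ≤ f x - f x₀ := by
  have hopen : ∀ t ∈ Set.Ioo (0 : ℝ) 1, t * (μ / 2 * ‖x - x₀‖ ^ 2) ≤ f x - f x₀ := by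
    rintro t ⟨ht0, ht1⟩
    have hchord := hsc.2 (Set.mem_univ x₀) (Set.mem_univ x) ht0.le (sub_nonneg.2 ht1.le)
      (add_sub_cancel t 1)
    have := hmin (t • x₀ + (1 - t) • x)
    rw [norm_sub_rev, smul_eq_mul, smul_eq_mul] at hchord
    nlinarith [sub_pos.2 ht1]
  have hclosed : IsClosed {t : ℝ | t * (μ / 2 * ‖x - x₀‖ ^ 2) ≤ f x - f x₀} :=
    isClosed_le (by fun_prop) continuous_const
  have := (hclosed.closure_subset_iff.2 hopen) (by
    rw [closure_Ioo zero_ne_one]; exact Set.right_mem_Icc.2 zero_le_one)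
  simpa using this

lemma LipschitzWith.memLp_comp {α E F : Type*} [MeasurableSpace α] {μ : Measure α}
    [IsFiniteMeasure μ] [NormedAddCommGroup E] [NormedAddCommGroup F] {K : NNReal}
    {g : E → F} (hg : LipschitzWith K g) {p : ENNReal} {X : α → E} (hX : MemLp X p μ) :
    MemLp (fun w => g (X w)) p μ := by
  have hg0 : LipschitzWith K (fun x => g x - g 0) := by
    simpa using hg.sub (LipschitzWith.const (g 0))
  convert (hg0.comp_memLp (by simp) hX).add (memLp_const (g 0)) using 1
  ext w
  simp

lemma ConvexOn.sub_le_inner_integral_gradient_add {E Ω : Type*} [NormedAddCommGroup E]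
    [InnerProductSpace ℝ E] [CompleteSpace E] [MeasurableSpace Ω] {P : Measure Ω}
    [IsProbabilityMeasure P] {h : E → ℝ} {h' : E → E} (hgrad : ∀ x, HasGradientAt h (h' x) x)
    (hconv : ConvexOn ℝ Set.univ h) {L : ℝ} (hL : ∀ x y, ‖h' x - h' y‖ ≤ L * ‖x - y‖)
    {X : Ω → E} (hX : MemLp X 2 P) (x x' : E) :
    h x - h x' ≤ ⟪∫ w, h' (X w) ∂P, x - x'⟫ + L / 2 * ∫ w, ‖X w - x‖ ^ 2 ∂P := by
  have hLip : LipschitzWith (Real.toNNReal L) h' :=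
    LipschitzWith.of_dist_le' fun a b => by simpa [dist_eq_norm] using hL a b
  have hgX : Integrable (fun w => h' (X w)) P := (hLip.memLp_comp hX).integrable one_le_two
  have hdev : Integrable (fun w => ‖X w - x‖ ^ 2) P :=
    (hX.sub (memLp_const x)).integrable_norm_pow two_ne_zero
  calc h x - h x' = ∫ _, (h x - h x') ∂P := by simp
    _ ≤ ∫ w, (⟪h' (X w), x - x'⟫ + L / 2 * ‖X w - x‖ ^ 2) ∂P :=
        integral_mono (integrable_const _) ((hgX.inner_const _).add (hdev.const_mul _))
          fun w => hconv.sub_le_inner_gradient_add_sq hgrad hL x x' (X w)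
    _ = ⟪∫ w, h' (X w) ∂P, x - x'⟫ + L / 2 * ∫ w, ‖X w - x‖ ^ 2 ∂P := by
        rw [integral_add (hgX.inner_const _) (hdev.const_mul _), integral_const_mul,
          real_inner_comm, ← integral_inner hgX]
        simp_rw [real_inner_comm]

lemma convexOn_sum {ι E : Type*} [AddCommGroup E] [Module ℝ E] {s : Set E} (hs : Convex ℝ s)
    (t : Finset ι) {f : ι → E → ℝ} (hf : ∀ i ∈ t, ConvexOn ℝ s (f i)) :
    ConvexOn ℝ s (fun x => ∑ i ∈ t, f i x) := by
  classical
  induction t using Finset.induction_on with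
  | empty => simpa using convexOn_const (0 : ℝ) hs
  | insert i t hi ih =>
    simp_rw [Finset.sum_insert hi]
    exact (hf i (mem_insert_self i t)).add (ih fun j hj => hf j (mem_insert_of_mem hj))

section PermAvg

variable {M n : ℕ} {α β : Type*} [AddCommGroup β] [Module ℝ β]

/-- The paper's `f^{π,i} = (1/M) Σ_m f_m^{π_m(i)}`. -/
noncomputable def permAvg (f : Fin M → Fin n → α → β) (π : Fin M → Equiv.Perm (Fin n))
    (i : Fin n) (x : α) : β :=
  (M : ℝ)⁻¹ • ∑ m, f m (π m i) x

lemma sum_permAvg (f : Fin M → Fin n → α → β) (π : Fin M → Equiv.Perm (Fin n)) (x : α) :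
    ∑ i, permAvg f π i x = (M : ℝ)⁻¹ • ∑ m, ∑ j, f m j x := by
  simp only [permAvg, ← Finset.smul_sum]
  rw [Finset.sum_comm]
  simp only [fun m => Equiv.sum_comp (π m) (fun j => f m j x)]

variable {E : Type*} [NormedAddCommGroup E] [InnerProductSpace ℝ E]

lemma hasGradientAt_permAvg [CompleteSpace E] {f : Fin M → Fin n → E → ℝ}
    {g : Fin M → Fin n → E → E} (hgrad : ∀ m j x, HasGradientAt (f m j) (g m j x) x)
    (π : Fin M → Equiv.Perm (Fin n)) (i : Fin n) (x : E) :
    HasGradientAt (permAvg f π i) (permAvg g π i x) x := by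
  rw [hasGradientAt_iff_hasFDerivAt]
  have := (HasFDerivAt.fun_sum fun m (_ : m ∈ univ) =>
    (hgrad m (π m i) x).hasFDerivAt).const_smul (M : ℝ)⁻¹
  refine HasFDerivAt.congr_fderiv (f := permAvg f π i) this ?_
  ext v
  simp [permAvg]

lemma convexOn_permAvg {f : Fin M → Fin n → E → ℝ} (hconv : ∀ m j, ConvexOn ℝ Set.univ (f m j))
    (π : Fin M → Equiv.Perm (Fin n)) (i : Fin n) : ConvexOn ℝ Set.univ (permAvg f π i) :=
  (convexOn_sum convex_univ univ fun m _ => hconv m (π m i)).smul (by positivity)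

end PermAvg

lemma ProbabilityTheory.IndepFun.map_prodMk_eq_prod {Ω α β : Type*} [MeasurableSpace Ω]
    [MeasurableSpace α] [MeasurableSpace β] {P : Measure Ω} [IsFiniteMeasure P] {ν : Measure β}
    {X : Ω → α} {Y : Ω → β} (hX : Measurable X) (hY : Measurable Y)
    (hind : IndepFun X Y P) (hlaw : P.map Y = ν) :
    P.map (fun w => (X w, Y w)) = (P.map X).prod ν := by
  rw [← hlaw]
  exact (indepFun_iff_map_prod_eq_prod_map_map hX.aemeasurable hY.aemeasurable).1 hind

lemma ProbabilityTheory.iIndepFun.indepFun_of_measurable_iSup {Ω ι β γ : Type*}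
    {mΩ : MeasurableSpace Ω} {P : Measure Ω} [mβ : MeasurableSpace β] [MeasurableSpace γ]
    {U : ι → Ω → β} (hU : ∀ i, Measurable (U i)) (hind : iIndepFun U P) {S : Set ι} {j : ι}
    (hj : j ∉ S) {X : Ω → γ} (hX : Measurable[⨆ i ∈ S, mβ.comap (U i)] X) :
    IndepFun X (U j) P := by
  have := indep_iSup_of_disjoint (fun i => (hU i).comap_le) hind.iIndep
    (Set.disjoint_singleton_right.2 hj)
  rw [IndepFun_iff_Indep]
  simpa using indep_of_indep_of_le_left this hX.comap_le

section Compression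

variable {E Ω₀ Ω : Type*} [NormedAddCommGroup E] [NormedSpace ℝ E] [MeasurableSpace E]
  [MeasurableSpace Ω₀] [MeasurableSpace Ω]

/-- `Q x o` is the compression of `x` with random seed `o ∼ ν`. -/
structure IsCompressionOperator (ν : Measure Ω₀) (Q : E → Ω₀ → E) (ω : ℝ) : Prop where
  measurable : Measurable (Function.uncurry Q)
  memLp : ∀ x, MemLp (Q x) 2 ν
  integral_eq : ∀ x, ∫ o, Q x o ∂ν = x
  integral_norm_sub_sq_le : ∀ x, ∫ o, ‖Q x o - x‖ ^ 2 ∂ν ≤ ω * ‖x‖ ^ 2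

variable {ν : Measure Ω₀} [IsProbabilityMeasure ν] {Q : E → Ω₀ → E} {ω : ℝ}

lemma IsCompressionOperator.integral_norm_sq_le (hQ : IsCompressionOperator ν Q ω) (v : E) :
    ∫ o, ‖Q v o‖ ^ 2 ∂ν ≤ 2 * (ω + 1) * ‖v‖ ^ 2 := by
  have hdev : Integrable (fun o => ‖Q v o - v‖ ^ 2) ν :=
    ((hQ.memLp v).sub (memLp_const v)).integrable_norm_pow two_ne_zero
  have hpt : ∀ o, ‖Q v o‖ ^ 2 ≤ 2 * ‖Q v o - v‖ ^ 2 + 2 * ‖v‖ ^ 2 := fun o => by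
    have := norm_add_le (Q v o - v) v
    rw [sub_add_cancel] at this
    nlinarith [norm_nonneg (Q v o), sq_nonneg (‖Q v o - v‖ - ‖v‖)]
  calc ∫ o, ‖Q v o‖ ^ 2 ∂ν ≤ ∫ o, (2 * ‖Q v o - v‖ ^ 2 + 2 * ‖v‖ ^ 2) ∂ν :=
        integral_mono ((hQ.memLp v).integrable_norm_pow two_ne_zero)
          ((hdev.const_mul 2).add (integrable_const _)) hpt
    _ = 2 * ∫ o, ‖Q v o - v‖ ^ 2 ∂ν + 2 * ‖v‖ ^ 2 := by
        rw [integral_add (hdev.const_mul 2) (integrable_const _), integral_const_mul]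
        simp
    _ ≤ 2 * (ω + 1) * ‖v‖ ^ 2 := by linarith [hQ.integral_norm_sub_sq_le v]

variable [BorelSpace E] [SecondCountableTopology E] {P : Measure Ω} [IsProbabilityMeasure P]
  {X : Ω → E} {Y : Ω → Ω₀}

lemma IsCompressionOperator.memLp_comp (hQ : IsCompressionOperator ν Q ω) (hX : Measurable X)
    (hY : Measurable Y) (hind : IndepFun X Y P) (hlaw : P.map Y = ν) (hX2 : MemLp X 2 P) :
    MemLp (fun w => Q (X w) (Y w)) 2 P := by
  have hF : Measurable (fun p : E × Ω₀ => ‖Q p.1 p.2‖ ^ 2) := hQ.measurable.norm.pow_const 2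
  refine (memLp_two_iff_integrable_sq_norm
    (hQ.measurable.comp (hX.prodMk hY)).aestronglyMeasurable).2 ?_
  change Integrable ((fun p : E × Ω₀ => ‖Q p.1 p.2‖ ^ 2) ∘ fun w => (X w, Y w)) P
  rw [← integrable_map_measure hF.aestronglyMeasurable (hX.prodMk hY).aemeasurable,
    hind.map_prodMk_eq_prod hX hY hlaw, integrable_prod_iff hF.aestronglyMeasurable]
  refine ⟨.of_forall fun x => (hQ.memLp x).integrable_norm_pow two_ne_zero, ?_⟩
  have hXsq : Integrable (fun x => 2 * (ω + 1) * ‖x‖ ^ 2) (P.map X) := by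
    refine Integrable.const_mul ?_ _
    rw [integrable_map_measure (by fun_prop) hX.aemeasurable]
    exact hX2.integrable_norm_pow two_ne_zero
  refine hXsq.mono hF.aestronglyMeasurable.norm.integral_prod_right' (.of_forall fun x => ?_)
  simp only [norm_pow, norm_norm]
  rw [Real.norm_of_nonneg (integral_nonneg fun _ => by positivity)]
  exact (hQ.integral_norm_sq_le x).trans (le_abs_self _)

lemma IsCompressionOperator.integral_comp [CompleteSpace E] (hQ : IsCompressionOperator ν Q ω)
    (hX : Measurable X) (hY : Measurable Y) (hind : IndepFun X Y P) (hlaw : P.map Y = ν)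
    (hX2 : MemLp X 2 P) : ∫ w, Q (X w) (Y w) ∂P = ∫ w, X w ∂P := by
  have hF : Measurable (fun p : E × Ω₀ => Q p.1 p.2) := hQ.measurable
  have hmap := hind.map_prodMk_eq_prod hX hY hlaw
  have hint : Integrable (fun p : E × Ω₀ => Q p.1 p.2) ((P.map X).prod ν) := by
    rw [← hmap, integrable_map_measure hF.aestronglyMeasurable (hX.prodMk hY).aemeasurable]
    exact (hQ.memLp_comp hX hY hind hlaw hX2).integrable one_le_two
  calc ∫ w, Q (X w) (Y w) ∂P = ∫ p, Q p.1 p.2 ∂((P.map X).prod ν) := by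
        rw [← hmap, integral_map (hX.prodMk hY).aemeasurable hF.aestronglyMeasurable]
    _ = ∫ x, x ∂(P.map X) := by simp_rw [integral_prod _ hint, hQ.integral_eq]
    _ = ∫ w, X w ∂P := integral_map hX.aemeasurable aestronglyMeasurable_id

end Compression

section Epoch

variable {E Ω₀ Ω : Type*} [NormedAddCommGroup E] [NormedSpace ℝ E]
  [MeasurableSpace E] [BorelSpace E] [SecondCountableTopology E] [MeasurableSpace Ω₀] {M n : ℕ}
  {Q : E → Ω₀ → E} {g : Fin M → Fin n → E → E} {π : Fin M → Equiv.Perm (Fin n)}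
  {U : Fin n → Fin M → Ω → Ω₀} {γ : ℝ} {x₀ : E} {y : ℕ → Ω → E}

/-- `y i` is the paper's `x_t^i`, for the epoch started at `x₀ = x_t`. -/
structure IsQRRIterates (Q : E → Ω₀ → E) (g : Fin M → Fin n → E → E)
    (π : Fin M → Equiv.Perm (Fin n)) (U : Fin n → Fin M → Ω → Ω₀) (γ : ℝ) (x₀ : E)
    (y : ℕ → Ω → E) : Prop where
  zero : ∀ w, y 0 w = x₀
  succ : ∀ (i : Fin n) (w : Ω), y ((i : ℕ) + 1) w
    = y (i : ℕ) w - (γ / M) • ∑ m, Q (g m (π m i) (y (i : ℕ) w)) (U i m w)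

abbrev pastSeeds (U : Fin n → Fin M → Ω → Ω₀) (k : ℕ) : MeasurableSpace Ω :=
  ⨆ p ∈ {p : Fin n × Fin M | (p.1 : ℕ) < k}, MeasurableSpace.comap (U p.1 p.2) ‹_›

lemma IsQRRIterates.measurable_pastSeeds (hy : IsQRRIterates Q g π U γ x₀ y)
    (hQmeas : Measurable (Function.uncurry Q)) (hg : ∀ m j, Measurable (g m j)) :
    ∀ k ≤ n, Measurable[pastSeeds U k] (y k) := by
  intro k
  induction k with
  | zero =>
    intro _
    rw [show y 0 = fun _ => x₀ from funext hy.zero]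
    exact measurable_const
  | succ k ih =>
    intro hk
    have hkn : k < n := hk
    have hyk : Measurable[pastSeeds U (k + 1)] (y k) :=
      (ih hkn.le).mono (biSup_mono fun p hp => Nat.lt_succ_of_lt hp) le_rfl
    have hseed : ∀ m, Measurable[pastSeeds U (k + 1)] (U ⟨k, hkn⟩ m) := fun m =>
      Measurable.of_comap_le <| le_iSup₂
        (f := fun p (_ : p ∈ {p : Fin n × Fin M | (p.1 : ℕ) < k + 1}) =>
          MeasurableSpace.comap (U p.1 p.2) ‹_›) (⟨k, hkn⟩, m) (Nat.lt_succ_self k)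
    rw [show y (k + 1) = _ from funext (hy.succ ⟨k, hkn⟩)]
    exact hyk.sub <| (Finset.measurable_sum _ fun m _ =>
      hQmeas.comp (((hg m _).comp hyk).prodMk (hseed m))).const_smul _

variable [MeasurableSpace Ω] {P : Measure Ω} {ν : Measure Ω₀} {ω : ℝ} {K : NNReal}

/-- `U i m` is the seed of worker `m` at inner step `i`. -/
structure IsIndepSeeds (P : Measure Ω) (ν : Measure Ω₀) (U : Fin n → Fin M → Ω → Ω₀) : Prop where
  measurable : ∀ i m, Measurable (U i m)
  map_eq : ∀ i m, P.map (U i m) = ν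
  iIndepFun : iIndepFun (fun p : Fin n × Fin M => U p.1 p.2) P

lemma IsQRRIterates.measurable (hy : IsQRRIterates Q g π U γ x₀ y) (hU : IsIndepSeeds P ν U)
    (hQmeas : Measurable (Function.uncurry Q)) (hg : ∀ m j, Measurable (g m j)) {k : ℕ}
    (hk : k ≤ n) : Measurable (y k) :=
  (hy.measurable_pastSeeds hQmeas hg k hk).mono
    (iSup₂_le fun p _ => (hU.measurable p.1 p.2).comap_le) le_rfl

lemma IsQRRIterates.indepFun_seed (hy : IsQRRIterates Q g π U γ x₀ y) (hU : IsIndepSeeds P ν U)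
    (hQmeas : Measurable (Function.uncurry Q)) (hg : ∀ m j, Measurable (g m j)) (i : Fin n)
    (m : Fin M) : IndepFun (y i) (U i m) P :=
  hU.iIndepFun.indepFun_of_measurable_iSup (U := fun p : Fin n × Fin M => U p.1 p.2)
    (fun p => hU.measurable p.1 p.2) (j := (i, m)) (by simp)
    (hy.measurable_pastSeeds hQmeas hg i i.isLt.le)

variable [IsProbabilityMeasure P] [IsProbabilityMeasure ν]

lemma IsQRRIterates.memLp_compress (hy : IsQRRIterates Q g π U γ x₀ y)
    (hU : IsIndepSeeds P ν U) (hQ : IsCompressionOperator ν Q ω)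
    (hg : ∀ m j, LipschitzWith K (g m j)) (i : Fin n) (m : Fin M) (hyi : MemLp (y i) 2 P) :
    MemLp (fun w => Q (g m (π m i) (y i w)) (U i m w)) 2 P :=
  have hgm : ∀ m j, Measurable (g m j) := fun m j => (hg m j).continuous.measurable
  hQ.memLp_comp ((hgm m _).comp (hy.measurable hU hQ.measurable hgm i.isLt.le))
    (hU.measurable i m) ((hy.indepFun_seed hU hQ.measurable hgm i m).comp (hgm m _)
    measurable_id) (hU.map_eq i m) ((hg m _).memLp_comp hyi)

lemma IsQRRIterates.memLp (hy : IsQRRIterates Q g π U γ x₀ y) (hU : IsIndepSeeds P ν U)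
    (hQ : IsCompressionOperator ν Q ω) (hg : ∀ m j, LipschitzWith K (g m j)) :
    ∀ k ≤ n, MemLp (y k) 2 P := by
  intro k
  induction k with
  | zero =>
    intro _
    rw [show y 0 = fun _ => x₀ from funext hy.zero]
    exact memLp_const x₀
  | succ k ih =>
    intro hk
    rw [show y (k + 1) = _ from funext (hy.succ ⟨k, hk⟩)]
    exact (ih (Nat.le_of_succ_le hk)).sub <| (memLp_finsetSum _ fun m _ =>
      hy.memLp_compress hU hQ hg ⟨k, hk⟩ m (ih (Nat.le_of_succ_le hk))).const_smul _

lemma IsQRRIterates.integral_compress [CompleteSpace E] (hy : IsQRRIterates Q g π U γ x₀ y)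
    (hU : IsIndepSeeds P ν U) (hQ : IsCompressionOperator ν Q ω)
    (hg : ∀ m j, LipschitzWith K (g m j)) (i : Fin n) (m : Fin M) :
    ∫ w, Q (g m (π m i) (y i w)) (U i m w) ∂P = ∫ w, g m (π m i) (y i w) ∂P :=
  have hgm : ∀ m j, Measurable (g m j) := fun m j => (hg m j).continuous.measurable
  hQ.integral_comp ((hgm m _).comp (hy.measurable hU hQ.measurable hgm i.isLt.le))
    (hU.measurable i m) ((hy.indepFun_seed hU hQ.measurable hgm i m).comp (hgm m _)
    measurable_id) (hU.map_eq i m) ((hg m _).memLp_comp (hy.memLp hU hQ hg i i.isLt.le))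

lemma IsQRRIterates.integrable_compress (hy : IsQRRIterates Q g π U γ x₀ y)
    (hU : IsIndepSeeds P ν U) (hQ : IsCompressionOperator ν Q ω)
    (hg : ∀ m j, LipschitzWith K (g m j)) (i : Fin n) (m : Fin M) :
    Integrable (fun w => Q (g m (π m i) (y i w)) (U i m w)) P :=
  (hy.memLp_compress hU hQ hg i m (hy.memLp hU hQ hg i i.isLt.le)).integrable one_le_two

lemma IsQRRIterates.integral_direction [CompleteSpace E] (hy : IsQRRIterates Q g π U γ x₀ y)
    (hU : IsIndepSeeds P ν U) (hQ : IsCompressionOperator ν Q ω)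
    (hg : ∀ m j, LipschitzWith K (g m j)) {gt : Ω → E}
    (hgt : ∀ w, gt w = ((M : ℝ) * n)⁻¹ • ∑ i : Fin n, ∑ m, Q (g m (π m i) (y i w)) (U i m w)) :
    ∫ w, gt w ∂P = (n : ℝ)⁻¹ • ∑ i : Fin n, ∫ w, permAvg g π i (y i w) ∂P := by
  have hyL := hy.memLp hU hQ hg
  have hQint := hy.integrable_compress hU hQ hg
  have hgint : ∀ (i : Fin n) m, Integrable (fun w => g m (π m i) (y i w)) P :=
    fun i m => ((hg m _).memLp_comp (hyL i i.isLt.le)).integrable one_le_two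
  calc ∫ w, gt w ∂P
      = ((M : ℝ) * n)⁻¹ • ∑ i : Fin n, ∑ m, ∫ w, Q (g m (π m i) (y i w)) (U i m w) ∂P := by
        rw [show gt = _ from funext hgt, integral_smul,
          integral_finsetSum _ fun i _ => integrable_finsetSum _ fun m _ => hQint i m]
        exact congrArg _ (Finset.sum_congr rfl fun i _ => integral_finsetSum _ fun m _ => hQint i m)
    _ = ((M : ℝ) * n)⁻¹ • ∑ i : Fin n, ∑ m, ∫ w, g m (π m i) (y i w) ∂P := by
        simp_rw [hy.integral_compress hU hQ hg]
    _ = (n : ℝ)⁻¹ • ∑ i : Fin n, ∫ w, permAvg g π i (y i w) ∂P := by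
        simp only [permAvg, integral_smul]
        rw [mul_inv, mul_comm, mul_smul, smul_sum]
        exact congrArg _ (Finset.sum_congr rfl fun i _ =>
          congrArg _ (integral_finsetSum _ fun m _ => hgint i m).symm)

lemma IsQRRIterates.integrable_direction (hy : IsQRRIterates Q g π U γ x₀ y)
    (hU : IsIndepSeeds P ν U) (hQ : IsCompressionOperator ν Q ω)
    (hg : ∀ m j, LipschitzWith K (g m j)) {gt : Ω → E}
    (hgt : ∀ w, gt w = ((M : ℝ) * n)⁻¹ • ∑ i : Fin n, ∑ m, Q (g m (π m i) (y i w)) (U i m w)) :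
    Integrable gt P := by
  rw [show gt = _ from funext hgt]
  exact (integrable_finsetSum _ fun i _ => integrable_finsetSum _ fun m _ =>
    hy.integrable_compress hU hQ hg i m).smul ((M : ℝ) * n)⁻¹

end Epoch

section EpochInner

variable {E Ω₀ Ω : Type*} [NormedAddCommGroup E] [InnerProductSpace ℝ E] [CompleteSpace E]
  [MeasurableSpace E] [BorelSpace E] [SecondCountableTopology E] [MeasurableSpace Ω₀]
  [MeasurableSpace Ω] {P : Measure Ω} [IsProbabilityMeasure P] {ν : Measure Ω₀}
  [IsProbabilityMeasure ν] {M n : ℕ} {Q : E → Ω₀ → E} {ω : ℝ} {g : Fin M → Fin n → E → E}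
  {K : NNReal} {π : Fin M → Equiv.Perm (Fin n)} {U : Fin n → Fin M → Ω → Ω₀} {γ : ℝ} {x₀ : E}
  {y : ℕ → Ω → E} {gt : Ω → E}

lemma IsQRRIterates.integral_inner_direction (hy : IsQRRIterates Q g π U γ x₀ y)
    (hU : IsIndepSeeds P ν U) (hQ : IsCompressionOperator ν Q ω)
    (hg : ∀ m j, LipschitzWith K (g m j))
    (hgt : ∀ w, gt w = ((M : ℝ) * n)⁻¹ • ∑ i : Fin n, ∑ m, Q (g m (π m i) (y i w)) (U i m w))
    (c : E) :
    ∫ w, ⟪gt w, c⟫ ∂P = (n : ℝ)⁻¹ * ∑ i : Fin n, ⟪∫ w, permAvg g π i (y i w) ∂P, c⟫ := by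
  calc ∫ w, ⟪gt w, c⟫ ∂P = ⟪∫ w, gt w ∂P, c⟫ := by
        simp_rw [real_inner_comm c]
        exact integral_inner (hy.integrable_direction hU hQ hg hgt) c
    _ = _ := by rw [hy.integral_direction hU hQ hg hgt, real_inner_smul_left, sum_inner]

lemma IsQRRIterates.sub_le_integral_inner_direction (hy : IsQRRIterates Q g π U γ x₀ y)
    (hU : IsIndepSeeds P ν U) (hQ : IsCompressionOperator ν Q ω) {f : Fin M → Fin n → E → ℝ}
    (hgrad : ∀ m j x, HasGradientAt (f m j) (g m j x) x)
    (hconv : ∀ m j, ConvexOn ℝ Set.univ (f m j)) (hg : ∀ m j, LipschitzWith K (g m j)) {L : ℝ}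
    (hL : ∀ i x x', ‖permAvg g π i x - permAvg g π i x'‖ ≤ L * ‖x - x'‖) (hn : 0 < n)
    (hgt : ∀ w, gt w = ((M : ℝ) * n)⁻¹ • ∑ i : Fin n, ∑ m, Q (g m (π m i) (y i w)) (U i m w))
    (x' : E) :
    ((M : ℝ) * n)⁻¹ * ∑ m, ∑ j, f m j x₀ - ((M : ℝ) * n)⁻¹ * ∑ m, ∑ j, f m j x'
      ≤ ∫ w, ⟪gt w, x₀ - x'⟫ ∂P + L / (2 * n) * ∑ i : Fin n, ∫ w, ‖y i w - x₀‖ ^ 2 ∂P := by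
  have hn0 : (0 : ℝ) < n := by exact_mod_cast hn
  have hstep : ∀ i : Fin n, permAvg f π i x₀ - permAvg f π i x'
      ≤ ⟪∫ w, permAvg g π i (y i w) ∂P, x₀ - x'⟫ + L / 2 * ∫ w, ‖y i w - x₀‖ ^ 2 ∂P :=
    fun i => (convexOn_permAvg hconv π i).sub_le_inner_integral_gradient_add
      (hasGradientAt_permAvg hgrad π i) (hL i) (hy.memLp hU hQ hg i i.isLt.le) x₀ x'
  have hsum := Finset.sum_le_sum fun i (_ : i ∈ univ) => hstep i
  rw [sum_sub_distrib, sum_permAvg, sum_permAvg, sum_add_distrib, ← mul_sum] at hsum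
  rw [hy.integral_inner_direction hU hQ hg hgt, mul_inv, ← sub_nonneg]
  refine (mul_nonneg (inv_nonneg.2 hn0.le) (sub_nonneg.2 hsum)).trans_eq ?_
  simp only [smul_eq_mul]
  field_simp

end EpochInner

theorem q_rr_inner_product_bound_general
    {d M n : ℕ} (hn : 0 < n)
    (f : Fin M → Fin n → EuclideanSpace ℝ (Fin d) → ℝ)
    (g : Fin M → Fin n → EuclideanSpace ℝ (Fin d) → EuclideanSpace ℝ (Fin d))
    (hgrad : ∀ m i x, HasGradientAt (f m i) (g m i x) x)
    (hconv : ∀ m i, ConvexOn ℝ Set.univ (f m i))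
    (Lmax : ℝ)
    (hsmooth : ∀ m i x y, ‖g m i x - g m i y‖ ≤ Lmax * ‖x - y‖)
    -- the averaged summands f^{π,i} = (1/M) Σ_m f_m^{π_m(i)} are L̃-smooth
    (Ltil : ℝ)
    (hLtil : ∀ (σs : Fin M → Equiv.Perm (Fin n)) (i : Fin n)
      (x y : EuclideanSpace ℝ (Fin d)),
      ‖(M : ℝ)⁻¹ • ∑ m, g m (σs m i) x - (M : ℝ)⁻¹ • ∑ m, g m (σs m i) y‖ ≤ Ltil * ‖x - y‖)
    (omg : ℝ)
    -- f = (1/(Mn)) Σ_m Σ_j f_m^j is μ-strongly convex with unique minimizer x*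
    (μ : ℝ)
    (fbar : EuclideanSpace ℝ (Fin d) → ℝ)
    (hfbar : fbar = fun x => ((M : ℝ) * n)⁻¹ * ∑ m, ∑ j, f m j x)
    (hsc : StrongConvexOn Set.univ μ fbar)
    (xstar : EuclideanSpace ℝ (Fin d))
    (hmin : ∀ y, fbar xstar ≤ fbar y)
    -- the compression operator: Q x (U w) is unbiased with relative variance omg,
    -- where the seeds U i m are i.i.d. with law ν, independent across steps/workers
    {Ω₀ : Type*} [MeasurableSpace Ω₀] (ν : Measure Ω₀) [IsProbabilityMeasure ν]
    (Q : EuclideanSpace ℝ (Fin d) → Ω₀ → EuclideanSpace ℝ (Fin d))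
    (hQmeas : Measurable (Function.uncurry Q))
    (hQmem : ∀ x, MemLp (Q x) 2 ν)
    (hQmean : ∀ x, ∫ o, Q x o ∂ν = x)
    (hQvar : ∀ x, ∫ o, ‖Q x o - x‖ ^ 2 ∂ν ≤ omg * ‖x‖ ^ 2)
    {Ω : Type*} [MeasurableSpace Ω] (P : Measure Ω) [IsProbabilityMeasure P]
    (U : Fin n → Fin M → Ω → Ω₀)
    (hUmeas : ∀ i m, Measurable (U i m))
    (hUdist : ∀ i m, Measure.map (U i m) P = ν)
    (hUindep : iIndepFun (m := fun _ : Fin n × Fin M => (inferInstance : MeasurableSpace Ω₀))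
      (fun p => U p.1 p.2) P)
    -- epoch t : current point `xt`, fixed permutations `π`
    (γ : ℝ) (hγ : 0 < γ) (τ : ℝ) (hτ : τ = γ * n)
    (xt : EuclideanSpace ℝ (Fin d)) (π : Fin M → Equiv.Perm (Fin n))
    (y : ℕ → Ω → EuclideanSpace ℝ (Fin d))
    (hy0 : ∀ w, y 0 w = xt)
    (hystep : ∀ (i : Fin n) (w : Ω), y ((i : ℕ) + 1) w
      = y (i : ℕ) w - (γ / M) • ∑ m, Q (g m (π m i) (y (i : ℕ) w)) (U i m w))
    (gt : Ω → EuclideanSpace ℝ (Fin d))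
    (hgt : ∀ w, gt w = ((M : ℝ) * n)⁻¹ •
      ∑ i : Fin n, ∑ m, Q (g m (π m i) (y (i : ℕ) w)) (U i m w))
    :
    -(2 * τ) * ∫ w, (inner ℝ (gt w) (xt - xstar) : ℝ) ∂P
      ≤ -(τ * μ / 2) * ‖xt - xstar‖ ^ 2 - τ * (fbar xt - fbar xstar)
        + τ * Ltil / n * ∑ i : Fin n, ∫ w, ‖y (i : ℕ) w - xt‖ ^ 2 ∂P := by
  have hLip : ∀ m j, LipschitzWith (Real.toNNReal Lmax) (g m j) := fun m j =>
    LipschitzWith.of_dist_le' fun a b => by simpa [dist_eq_norm] using hsmooth m j a b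
  have hy : IsQRRIterates Q g π U γ xt y := ⟨hy0, hystep⟩
  have hmean := hy.sub_le_integral_inner_direction ⟨hUmeas, hUdist, hUindep⟩
    ⟨hQmeas, hQmem, hQmean, hQvar⟩ hgrad hconv hLip (hLtil π) hn hgt xstar
  rw [← congrFun hfbar xt, ← congrFun hfbar xstar] at hmean
  have hcurv := hsc.sq_norm_sub_le_of_isMinOn hmin xt
  have hτ0 : 0 < τ := hτ ▸ by positivity
  linear_combination mul_le_mul_of_nonneg_left hmean (by positivity : (0 : ℝ) ≤ 2 * τ)
    + mul_le_mul_of_nonneg_left hcurv hτ0.le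

/-- **inner-product bound for Q-RR without strongly convex summands.**
One epoch of Q-RR with `x_t = xt` and the permutations fixed; `τ = γn` and
`g_t = (1/(Mn)) Σ_{i,m} Q(∇f_m^{π_m(i)}(x_t^i))`; the expectation is over the
compression randomness within the epoch.  -/
theorem q_rr_inner_product_bound
    {d M n : ℕ} (hM : 0 < M) (hn : 0 < n)
    (f : Fin M → Fin n → EuclideanSpace ℝ (Fin d) → ℝ)
    (g : Fin M → Fin n → EuclideanSpace ℝ (Fin d) → EuclideanSpace ℝ (Fin d))
    (hgrad : ∀ m i x, HasGradientAt (f m i) (g m i x) x)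
    (hconv : ∀ m i, ConvexOn ℝ Set.univ (f m i))
    (Lmax : ℝ)
    (hsmooth : ∀ m i x y, ‖g m i x - g m i y‖ ≤ Lmax * ‖x - y‖)
    -- the averaged summands f^{π,i} = (1/M) Σ_m f_m^{π_m(i)} are L̃-smooth
    (Ltil : ℝ)
    (hLtil : ∀ (σs : Fin M → Equiv.Perm (Fin n)) (i : Fin n)
      (x y : EuclideanSpace ℝ (Fin d)),
      ‖(M : ℝ)⁻¹ • ∑ m, g m (σs m i) x - (M : ℝ)⁻¹ • ∑ m, g m (σs m i) y‖ ≤ Ltil * ‖x - y‖)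
    (omg : ℝ) (homg : 0 < omg)
    -- f = (1/(Mn)) Σ_m Σ_j f_m^j is μ-strongly convex with unique minimizer x*
    (μ : ℝ) (hμ : 0 < μ)
    (fbar : EuclideanSpace ℝ (Fin d) → ℝ)
    (hfbar : fbar = fun x => ((M : ℝ) * n)⁻¹ * ∑ m, ∑ j, f m j x)
    (hsc : StrongConvexOn Set.univ μ fbar)
    (xstar : EuclideanSpace ℝ (Fin d))
    (hmin : ∀ y, fbar xstar ≤ fbar y)
    (huniq : ∀ y, (∀ z, fbar y ≤ fbar z) → y = xstar)
    -- the compression operator: Q x (U w) is unbiased with relative variance omg,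
    -- where the seeds U i m are i.i.d. with law ν, independent across steps/workers
    {Ω₀ : Type*} [MeasurableSpace Ω₀] (ν : Measure Ω₀) [IsProbabilityMeasure ν]
    (Q : EuclideanSpace ℝ (Fin d) → Ω₀ → EuclideanSpace ℝ (Fin d))
    (hQmeas : Measurable (Function.uncurry Q))
    (hQmem : ∀ x, MemLp (Q x) 2 ν)
    (hQmean : ∀ x, ∫ o, Q x o ∂ν = x)
    (hQvar : ∀ x, ∫ o, ‖Q x o - x‖ ^ 2 ∂ν ≤ omg * ‖x‖ ^ 2)
    {Ω : Type*} [MeasurableSpace Ω] (P : Measure Ω) [IsProbabilityMeasure P]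
    (U : Fin n → Fin M → Ω → Ω₀)
    (hUmeas : ∀ i m, Measurable (U i m))
    (hUdist : ∀ i m, Measure.map (U i m) P = ν)
    (hUindep : iIndepFun (m := fun _ : Fin n × Fin M => (inferInstance : MeasurableSpace Ω₀))
      (fun p => U p.1 p.2) P)
    -- epoch t : current point `xt`, fixed permutations `π`
    (γ : ℝ) (hγ : 0 < γ) (τ : ℝ) (hτ : τ = γ * n)
    (xt : EuclideanSpace ℝ (Fin d)) (π : Fin M → Equiv.Perm (Fin n))
    (y : ℕ → Ω → EuclideanSpace ℝ (Fin d))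
    (hy0 : ∀ w, y 0 w = xt)
    (hystep : ∀ (i : Fin n) (w : Ω), y ((i : ℕ) + 1) w
      = y (i : ℕ) w - (γ / M) • ∑ m, Q (g m (π m i) (y (i : ℕ) w)) (U i m w))
    (gt : Ω → EuclideanSpace ℝ (Fin d))
    (hgt : ∀ w, gt w = ((M : ℝ) * n)⁻¹ •
      ∑ i : Fin n, ∑ m, Q (g m (π m i) (y (i : ℕ) w)) (U i m w))
    :
    -(2 * τ) * ∫ w, (inner ℝ (gt w) (xt - xstar) : ℝ) ∂P
      ≤ -(τ * μ / 2) * ‖xt - xstar‖ ^ 2 - τ * (fbar xt - fbar xstar)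
        + τ * Ltil / n * ∑ i : Fin n, ∫ w, ‖y (i : ℕ) w - xt‖ ^ 2 ∂P :=
  q_rr_inner_product_bound_general hn f g hgrad hconv Lmax hsmooth Ltil hLtil omg μ fbar hfbar hsc
    xstar hmin ν Q hQmeas hQmem hQmean hQvar P U hUmeas hUdist hUindep γ hγ τ hτ xt π y hy0 hystep
    gt hgt
end

section
/- Second-moment bound for the Q-NASTYA server estimator: Suppose Q is a compression operator with parameter ω > 0, f is μ-strongly convex, each f_m^i is convex and L_{i,m}-smooth with L_max = max_{i,m} L_{i,m}. Then in round t of Q-NASTYA, with g_t = (1/M)Σ_{m=1}^M Q(g_{t,m}) and g_{t,m} = (1/n)Σ_{i=0}^{n−1}∇f_m^{π_m(i)}(x_{t,m}^i), E_Q[‖g_t‖²] ≤ (2L_max²(1 + ω/M)/(Mn))Σ_{m=1}^M Σ_{i=0}^{n−1}‖x_{t,m}^i − x_t‖² + 8L_max(1 + ω/M)(f(x_t) − f(x*)) + (4ω/M)ζ*², where E_Q denotes expectation over the compression randomness at round t. -/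
/-!
Split `g_{t,m} = (g_{t,m} - ∇f_m(x_t)) + (∇f_m(x_t) - ∇f_m(x*)) + ∇f_m(x*)`. Unbiasedness and
independence of the compressors give `E‖g_t‖² ≤ M⁻² (ω Σ_m ‖g_{t,m}‖² + ‖Σ_m g_{t,m}‖²)`, and as
`Σ_m ∇f_m(x*) = 0` this is at most `M⁻² ((ω + M) (2U + 4V) + 4ω Σ_m ‖∇f_m(x*)‖²)`, where `U` and
`V` are the sums of squared norms of the first two pieces. Smoothness along the local path bounds
`U` by `L_max² n⁻¹ Σ_{m,i} ‖x_{t,m}^i - x_t‖²`. Cocoercivity of the gradient of a convex smooth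
function bounds `V` by `2 L_max n⁻¹` times the sum of the Bregman divergences
`D_{f_m^j}(x_t, x*)`, and since `x*` is stationary these add up to `M n (f(x_t) - f(x*))`.
-/

open MeasureTheory ProbabilityTheory Finset
open scoped RealInnerProductSpace

section Gradient

variable {E : Type*} [NormedAddCommGroup E] [InnerProductSpace ℝ E] [CompleteSpace E]
  {h : E → ℝ} {h' : E → E} {g x : E} {L : ℝ}

theorem HasGradientAt.sum {ι : Type*} (s : Finset ι) {f : ι → E → ℝ} {f' : ι → E}
    (hf : ∀ i ∈ s, HasGradientAt (f i) (f' i) x) :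
    HasGradientAt (fun y => ∑ i ∈ s, f i y) (∑ i ∈ s, f' i) x := by
  rw [hasGradientAt_iff_hasFDerivAt, map_sum]
  exact HasFDerivAt.fun_sum fun i hi => hasGradientAt_iff_hasFDerivAt.1 (hf i hi)

theorem HasGradientAt.const_mul (hh : HasGradientAt h g x) (c : ℝ) :
    HasGradientAt (fun y => c * h y) (c • g) x := by
  rw [hasGradientAt_iff_hasFDerivAt, map_smul]
  exact (hasGradientAt_iff_hasFDerivAt.1 hh).const_mul c

theorem HasGradientAt.sub_inner (hh : HasGradientAt h g x) (c : E) :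
    HasGradientAt (fun y => h y - ⟪c, y⟫) (g - c) x := by
  rw [hasGradientAt_iff_hasFDerivAt, map_sub]
  exact (hasGradientAt_iff_hasFDerivAt.1 hh).sub (InnerProductSpace.toDual ℝ E c).hasFDerivAt

theorem IsLocalMin.hasGradientAt_eq_zero (hmin : IsLocalMin h x) (hh : HasGradientAt h g x) :
    g = 0 := by
  simpa using hmin.hasFDerivAt_eq_zero (hasGradientAt_iff_hasFDerivAt.1 hh)

theorem HasGradientAt.hasDerivAt_add_smul {w v : E} {t : ℝ}
    (hh : HasGradientAt h g (w + t • v)) :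
    HasDerivAt (fun s : ℝ => h (w + s • v)) ⟪g, v⟫ t := by
  have hline : HasDerivAt (fun s : ℝ => w + s • v) v t := by
    simpa using ((hasDerivAt_id t).smul_const v).const_add w
  exact (hasGradientAt_iff_hasFDerivAt.1 hh).comp_hasDerivAt t hline

theorem ConvexOn.inner_gradient_le (hc : ConvexOn ℝ Set.univ h) (hh : HasGradientAt h g x)
    (y : E) : ⟪g, y - x⟫ ≤ h y - h x := by
  have hline : ConvexOn ℝ Set.univ (fun t : ℝ => h (x + t • (y - x))) := by
    simpa [Function.comp_def, AffineMap.lineMap_apply, add_comm]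
      using hc.comp_affineMap (AffineMap.lineMap x y : ℝ →ᵃ[ℝ] E)
  have hd : HasDerivAt (fun t : ℝ => h (x + t • (y - x))) ⟪g, y - x⟫ 0 :=
    HasGradientAt.hasDerivAt_add_smul (by simpa using hh)
  simpa [slope_def_field] using
    hline.le_slope_of_hasDerivAt (Set.mem_univ 0) (Set.mem_univ 1) zero_lt_one hd

theorem le_add_inner_add_of_lipschitz_gradient (hh : ∀ x, HasGradientAt h (h' x) x)
    (hL : ∀ x y, ‖h' x - h' y‖ ≤ L * ‖x - y‖) (w v : E) :
    h (w + v) ≤ h w + ⟪h' w, v⟫ + L / 2 * ‖v‖ ^ 2 := by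
  set χ : ℝ → ℝ := fun t => h (w + t • v) - t * ⟪h' w, v⟫ - L / 2 * t ^ 2 * ‖v‖ ^ 2
  have hχ : ∀ t, HasDerivAt χ (⟪h' (w + t • v) - h' w, v⟫ - L * t * ‖v‖ ^ 2) t := by
    intro t
    refine (((hh (w + t • v)).hasDerivAt_add_smul.sub
      ((hasDerivAt_id t).mul_const ⟪h' w, v⟫)).sub
      (((hasDerivAt_pow 2 t).const_mul (L / 2)).mul_const (‖v‖ ^ 2))).congr_deriv ?_
    rw [inner_sub_left]
    ring
  have hχ' : ∀ t ∈ interior (Set.Icc (0 : ℝ) 1), deriv χ t ≤ 0 := by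
    intro t ht
    rw [interior_Icc] at ht
    rw [(hχ t).deriv, sub_nonpos]
    calc ⟪h' (w + t • v) - h' w, v⟫
        ≤ ‖h' (w + t • v) - h' w‖ * ‖v‖ := real_inner_le_norm _ _
      _ ≤ L * ‖t • v‖ * ‖v‖ := by
          gcongr
          simpa using hL (w + t • v) w
      _ = L * t * ‖v‖ ^ 2 := by rw [norm_smul, Real.norm_of_nonneg ht.1.le]; ring
  have hanti : AntitoneOn χ (Set.Icc 0 1) :=
    antitoneOn_of_deriv_nonpos (convex_Icc 0 1)
      (HasDerivAt.continuousOn fun t _ => hχ t)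
      (fun t _ => (hχ t).differentiableAt.differentiableWithinAt) hχ'
  have hχ0 : χ 0 = h w := by simp [χ]
  have hχ1 : χ 1 = h (w + v) - ⟪h' w, v⟫ - L / 2 * ‖v‖ ^ 2 := by simp [χ]
  linarith [hanti (by simp) (by simp) zero_le_one]

theorem norm_gradient_sq_le_of_forall_le (hh : ∀ x, HasGradientAt h (h' x) x)
    (hL : ∀ x y, ‖h' x - h' y‖ ≤ L * ‖x - y‖) (hLpos : 0 < L) {y : E} (hmin : ∀ z, h y ≤ h z)
    (x : E) : ‖h' x‖ ^ 2 ≤ 2 * L * (h x - h y) := by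
  have hdesc := le_add_inner_add_of_lipschitz_gradient hh hL x (-L⁻¹ • h' x)
  rw [inner_smul_right, real_inner_self_eq_norm_sq, norm_smul, mul_pow, norm_neg,
    Real.norm_of_nonneg (inv_nonneg.2 hLpos.le)] at hdesc
  have hy : h y ≤ h x - (2 * L)⁻¹ * ‖h' x‖ ^ 2 := by
    refine (hmin _).trans (hdesc.trans_eq ?_)
    field_simp
    ring
  have : ‖h' x‖ ^ 2 = 2 * L * ((2 * L)⁻¹ * ‖h' x‖ ^ 2) := by field_simp
  rw [this]
  gcongr
  linarith

theorem ConvexOn.norm_sub_gradient_sq_le (hc : ConvexOn ℝ Set.univ h)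
    (hh : ∀ x, HasGradientAt h (h' x) x) (hL : ∀ x y, ‖h' x - h' y‖ ≤ L * ‖x - y‖) (x y : E) :
    ‖h' x - h' y‖ ^ 2 ≤ 2 * L * (h x - h y - ⟪h' y, x - y⟫) := by
  rcases eq_or_ne x y with rfl | hxy
  · simp
  have hL0 : 0 ≤ L := nonneg_of_mul_nonneg_left ((norm_nonneg _).trans (hL x y))
    (by simpa [sub_eq_zero] using hxy)
  rcases hL0.eq_or_lt with rfl | hLpos
  · simpa using hL x y
  -- `y` minimises `u ↦ h u - ⟪h' y, u⟫`, whose gradient is still `L`-Lipschitz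
  have hmin : ∀ z, h y - ⟪h' y, y⟫ ≤ h z - ⟪h' y, z⟫ := fun z => by
    have := hc.inner_gradient_le (hh y) z
    rw [inner_sub_right] at this
    linarith
  have := norm_gradient_sq_le_of_forall_le (fun u => (hh u).sub_inner (h' y))
    (fun u v => by simpa using hL u v) hLpos hmin x
  convert this using 2
  rw [inner_sub_right]
  ring

end Gradient

section FiniteSums

variable {E : Type*} [SeminormedAddCommGroup E]

theorem norm_add₃_sq_le (x y z : E) :
    ‖x + y + z‖ ^ 2 ≤ 2 * ‖x‖ ^ 2 + 4 * ‖y‖ ^ 2 + 4 * ‖z‖ ^ 2 := by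
  nlinarith [norm_add₃_le (a := x) (b := y) (c := z), norm_nonneg (x + y + z),
    sq_nonneg (‖x‖ - ‖y‖ - ‖z‖), sq_nonneg (‖y‖ - ‖z‖)]

theorem norm_sum_sq_le_card_mul {ι : Type*} (s : Finset ι) (z : ι → E) :
    ‖∑ i ∈ s, z i‖ ^ 2 ≤ #s * ∑ i ∈ s, ‖z i‖ ^ 2 :=
  (pow_le_pow_left₀ (norm_nonneg _) (norm_sum_le s z) 2).trans sq_sum_le_card_mul_sum_sq

theorem norm_average_sq_le [NormedSpace ℝ E] {ι : Type*} (s : Finset ι) (z : ι → E) :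
    ‖(#s : ℝ)⁻¹ • ∑ i ∈ s, z i‖ ^ 2 ≤ (#s : ℝ)⁻¹ * ∑ i ∈ s, ‖z i‖ ^ 2 := by
  rcases s.eq_empty_or_nonempty with rfl | hs
  · simp
  have hcard : (0 : ℝ) < #s := by exact_mod_cast hs.card_pos
  rw [norm_smul, mul_pow, Real.norm_of_nonneg (by positivity)]
  calc (#s : ℝ)⁻¹ ^ 2 * ‖∑ i ∈ s, z i‖ ^ 2
      ≤ (#s : ℝ)⁻¹ ^ 2 * (#s * ∑ i ∈ s, ‖z i‖ ^ 2) := by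
        gcongr
        exact norm_sum_sq_le_card_mul s z
    _ = (#s : ℝ)⁻¹ * ∑ i ∈ s, ‖z i‖ ^ 2 := by field_simp

theorem mul_sum_norm_sq_add_norm_sum_sq_le {ι : Type*} [Fintype ι] {ω : ℝ} (hω : 0 ≤ ω)
    (u v s : ι → E) (hs : ∑ i, s i = 0) :
    ω * ∑ i, ‖u i + v i + s i‖ ^ 2 + ‖∑ i, (u i + v i + s i)‖ ^ 2
      ≤ (ω + Fintype.card ι) * (2 * ∑ i, ‖u i‖ ^ 2 + 4 * ∑ i, ‖v i‖ ^ 2)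
        + 4 * ω * ∑ i, ‖s i‖ ^ 2 := by
  have hpoint : ∑ i, ‖u i + v i + s i‖ ^ 2
      ≤ 2 * ∑ i, ‖u i‖ ^ 2 + 4 * ∑ i, ‖v i‖ ^ 2 + 4 * ∑ i, ‖s i‖ ^ 2 := by
    simp only [mul_sum, ← sum_add_distrib]
    exact sum_le_sum fun i _ => norm_add₃_sq_le _ _ _
  have hsum : ‖∑ i, (u i + v i + s i)‖ ^ 2
      ≤ Fintype.card ι * (2 * ∑ i, ‖u i‖ ^ 2 + 4 * ∑ i, ‖v i‖ ^ 2) := by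
    have hu := norm_sum_sq_le_card_mul univ u
    have hv := norm_sum_sq_le_card_mul univ v
    rw [card_univ] at hu hv
    rw [sum_add_distrib, sum_add_distrib, hs]
    refine (norm_add₃_sq_le _ _ _).trans ?_
    rw [norm_zero]
    linarith
  nlinarith [mul_le_mul_of_nonneg_left hpoint hω]

end FiniteSums

section SecondMoment

variable {Ω : Type*} [MeasurableSpace Ω] {P : Measure Ω} [IsProbabilityMeasure P]
  {κ : Type*} [Fintype κ]

theorem integral_sum_sq_of_pairwise_indepFun {X : κ → Ω → ℝ} (hX : ∀ k, MemLp (X k) 2 P)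
    (hind : Pairwise fun i j => X i ⟂ᵢ[P] X j) :
    ∫ w, (∑ k, X k w) ^ 2 ∂P
      = ∑ k, ∫ w, (X k w - ∫ w', X k w' ∂P) ^ 2 ∂P + (∑ k, ∫ w, X k w ∂P) ^ 2 := by
  have hsum : MemLp (∑ k, X k) 2 P := memLp_finsetSum' univ fun k _ => hX k
  have hvar := IndepFun.variance_sum (s := univ) (fun k _ => hX k) fun i _ j _ hij => hind hij
  have hvar_k : ∀ k, variance (X k) P = ∫ w, (X k w - ∫ w', X k w' ∂P) ^ 2 ∂P := fun k =>
    variance_eq_integral (hX k).aemeasurable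
  rw [variance_eq_sub hsum, sum_congr rfl fun k _ => hvar_k k] at hvar
  simp only [Pi.pow_apply, Finset.sum_apply] at hvar
  rw [integral_finsetSum _ fun k _ => (hX k).integrable one_le_two] at hvar
  linarith

theorem integral_norm_sum_sq_of_pairwise_indepFun {ι : Type*} [Fintype ι]
    {X : κ → Ω → EuclideanSpace ℝ ι} (hX : ∀ k, MemLp (X k) 2 P)
    (hind : Pairwise fun i j => X i ⟂ᵢ[P] X j) :
    ∫ w, ‖∑ k, X k w‖ ^ 2 ∂P
      = ∑ k, ∫ w, ‖X k w - ∫ w', X k w' ∂P‖ ^ 2 ∂P + ‖∑ k, ∫ w, X k w ∂P‖ ^ 2 := by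
  have hcoord : ∀ k (j : ι), MemLp (fun w => X k w j) 2 P := fun k j =>
    (EuclideanSpace.proj (𝕜 := ℝ) j).comp_memLp' (hX k)
  have hmean : ∀ k (j : ι), (∫ w, X k w ∂P) j = ∫ w, X k w j ∂P := fun k j =>
    ((EuclideanSpace.proj (𝕜 := ℝ) j).integral_comp_comm ((hX k).integrable one_le_two)).symm
  have hind' : ∀ j : ι, Pairwise fun k l => (fun w => X k w j) ⟂ᵢ[P] (fun w => X l w j) :=
    fun j k l hkl => (hind hkl).comp (EuclideanSpace.proj (𝕜 := ℝ) j).continuous.measurable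
      (EuclideanSpace.proj (𝕜 := ℝ) j).continuous.measurable
  have hsq : ∀ k (j : ι), Integrable (fun w => (X k w j - ∫ w', X k w' j ∂P) ^ 2) P :=
    fun k j => ((hcoord k j).sub (memLp_const _)).integrable_sq
  simp only [EuclideanSpace.real_norm_sq_eq, PiLp.sub_apply, hmean, WithLp.ofLp_sum,
    Finset.sum_apply]
  rw [integral_finsetSum _ fun j _ =>
    (memLp_finsetSum univ fun k _ => hcoord k j).integrable_sq]
  simp only [integral_finsetSum _ fun j _ => hsq _ j]
  rw [sum_comm (s := (univ : Finset κ)), ← sum_add_distrib]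
  exact sum_congr rfl fun j _ =>
    integral_sum_sq_of_pairwise_indepFun (fun k => hcoord k j) (hind' j)

theorem integral_norm_smul_sum_sq_le {ι : Type*} [Fintype ι]
    {q : κ → Ω → EuclideanSpace ℝ ι} {b : κ → EuclideanSpace ℝ ι} {ω : ℝ}
    (hq : ∀ k, MemLp (q k) 2 P) (hind : Pairwise fun i j => q i ⟂ᵢ[P] q j)
    (hmean : ∀ k, ∫ w, q k w ∂P = b k)
    (hvar : ∀ k, ∫ w, ‖q k w - b k‖ ^ 2 ∂P ≤ ω * ‖b k‖ ^ 2) (c : ℝ) :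
    ∫ w, ‖c • ∑ k, q k w‖ ^ 2 ∂P ≤ c ^ 2 * (ω * ∑ k, ‖b k‖ ^ 2 + ‖∑ k, b k‖ ^ 2) := by
  simp only [norm_smul, mul_pow, Real.norm_eq_abs, sq_abs]
  rw [integral_const_mul, integral_norm_sum_sq_of_pairwise_indepFun hq hind]
  simp only [hmean, mul_sum]
  gcongr
  exact hvar _

end SecondMoment

section LocalSteps

variable {E : Type*} [NormedAddCommGroup E] [InnerProductSpace ℝ E] {n : ℕ}

theorem smul_sub_eq_average_of_steps {γ : ℝ} (hγ : γ ≠ 0) {G : Fin n → E} {y : ℕ → E}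
    (hy : ∀ i : Fin n, y (i + 1) = y i - γ • G i) :
    (γ * n)⁻¹ • (y 0 - y n) = (n : ℝ)⁻¹ • ∑ i, G i := by
  have hsum : y 0 - y n = γ • ∑ i, G i :=
    calc y 0 - y n = ∑ i ∈ range n, (y i - y (i + 1)) := (sum_range_sub' y n).symm
      _ = ∑ i : Fin n, (y i - y (i + 1)) :=
          (Fin.sum_univ_eq_sum_range (fun i => y i - y (i + 1)) n).symm
      _ = γ • ∑ i, G i := by simp only [hy, sub_sub_cancel, smul_sum]
  rw [hsum, smul_smul]
  congr 1
  field_simp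

theorem norm_average_perm_sub_average_sq_le {L : ℝ} (G : Fin n → E → E)
    (hG : ∀ i x y, ‖G i x - G i y‖ ≤ L * ‖x - y‖) (σ : Equiv.Perm (Fin n)) (y : Fin n → E)
    (x : E) :
    ‖(n : ℝ)⁻¹ • ∑ i, G (σ i) (y i) - (n : ℝ)⁻¹ • ∑ j, G j x‖ ^ 2
      ≤ L ^ 2 * ((n : ℝ)⁻¹ * ∑ i, ‖y i - x‖ ^ 2) := by
  rw [← Equiv.sum_comp σ (fun j => G j x), ← smul_sub, ← sum_sub_distrib]
  have havg := norm_average_sq_le univ fun i => G (σ i) (y i) - G (σ i) x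
  rw [card_univ, Fintype.card_fin] at havg
  calc _ ≤ (n : ℝ)⁻¹ * ∑ i, ‖G (σ i) (y i) - G (σ i) x‖ ^ 2 := havg
    _ ≤ (n : ℝ)⁻¹ * ∑ i, L ^ 2 * ‖y i - x‖ ^ 2 := by
        gcongr with i
        rw [← mul_pow]
        gcongr
        exact hG _ _ _
    _ = L ^ 2 * ((n : ℝ)⁻¹ * ∑ i, ‖y i - x‖ ^ 2) := by rw [← mul_sum]; ring

theorem norm_average_gradient_sub_sq_le [CompleteSpace E] {L : ℝ} {f : Fin n → E → ℝ}
    {g : Fin n → E → E} (hgrad : ∀ j x, HasGradientAt (f j) (g j x) x)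
    (hconv : ∀ j, ConvexOn ℝ Set.univ (f j)) (hL : ∀ j x y, ‖g j x - g j y‖ ≤ L * ‖x - y‖)
    (x y : E) :
    ‖(n : ℝ)⁻¹ • ∑ j, g j x - (n : ℝ)⁻¹ • ∑ j, g j y‖ ^ 2
      ≤ 2 * L * ((n : ℝ)⁻¹ * ∑ j, (f j x - f j y - ⟪g j y, x - y⟫)) := by
  rw [← smul_sub, ← sum_sub_distrib]
  have havg := norm_average_sq_le univ fun j => g j x - g j y
  rw [card_univ, Fintype.card_fin] at havg
  refine havg.trans ?_
  rw [mul_left_comm, mul_sum (a := 2 * L)]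
  gcongr with j
  exact (hconv j).norm_sub_gradient_sq_le (hgrad j) (hL j) x y

end LocalSteps

theorem sum_sum_gradient_eq_zero_of_forall_le {E : Type*} [NormedAddCommGroup E]
    [InnerProductSpace ℝ E] [CompleteSpace E] {ι κ : Type*} [Fintype ι] [Fintype κ]
    {f : ι → κ → E → ℝ} {g : ι → κ → E} {c : ℝ} (hc : c ≠ 0) {x : E}
    (hgrad : ∀ i j, HasGradientAt (f i j) (g i j) x)
    (hmin : ∀ y, c * ∑ i, ∑ j, f i j x ≤ c * ∑ i, ∑ j, f i j y) :
    ∑ i, ∑ j, g i j = 0 := by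
  have hgr := (HasGradientAt.sum univ fun i _ => HasGradientAt.sum univ fun j _ =>
    hgrad i j).const_mul c
  have hzero :=
    (show IsLocalMin _ x from Filter.Eventually.of_forall hmin).hasGradientAt_eq_zero hgr
  exact (smul_eq_zero.1 hzero).resolve_left hc

section Workers

variable {d M n : ℕ} {f : Fin M → Fin n → EuclideanSpace ℝ (Fin d) → ℝ}
  {g : Fin M → Fin n → EuclideanSpace ℝ (Fin d) → EuclideanSpace ℝ (Fin d)}

theorem sum_breg_eq_of_sum_gradient_eq_zero {x y : EuclideanSpace ℝ (Fin d)}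
    (h0 : ∑ m, ∑ j, g m j y = 0) :
    ∑ m, ∑ j, breg (f m j) (g m j) x y = ∑ m, ∑ j, f m j x - ∑ m, ∑ j, f m j y := by
  simp only [breg, sum_sub_distrib, ← sum_inner, h0, inner_zero_left, sub_zero]

theorem sum_norm_average_gradient_sub_sq_le {L : ℝ}
    (hgrad : ∀ m j x, HasGradientAt (f m j) (g m j x) x)
    (hconv : ∀ m j, ConvexOn ℝ Set.univ (f m j))
    (hL : ∀ m j x y, ‖g m j x - g m j y‖ ≤ L * ‖x - y‖) (x y : EuclideanSpace ℝ (Fin d))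
    (h0 : ∑ m, ∑ j, g m j y = 0) :
    ∑ m, ‖(n : ℝ)⁻¹ • ∑ j, g m j x - (n : ℝ)⁻¹ • ∑ j, g m j y‖ ^ 2
      ≤ 2 * L * ((n : ℝ)⁻¹ * (∑ m, ∑ j, f m j x - ∑ m, ∑ j, f m j y)) := by
  rw [← sum_breg_eq_of_sum_gradient_eq_zero h0, mul_sum, mul_sum]
  exact sum_le_sum fun m _ =>
    norm_average_gradient_sub_sq_le (hgrad m) (hconv m) (hL m) x y

end Workers

theorem q_nastya_second_moment_general
    {d M n : ℕ} (hM : 0 < M) (hn : 0 < n)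
    (f : Fin M → Fin n → EuclideanSpace ℝ (Fin d) → ℝ)
    (g : Fin M → Fin n → EuclideanSpace ℝ (Fin d) → EuclideanSpace ℝ (Fin d))
    (hgrad : ∀ m i x, HasGradientAt (f m i) (g m i x) x)
    (hconv : ∀ m i, ConvexOn ℝ Set.univ (f m i))
    (Lmax : ℝ)
    (hsmooth : ∀ m i x y, ‖g m i x - g m i y‖ ≤ Lmax * ‖x - y‖)
    (omg : ℝ) (homg : 0 < omg)
    -- f = (1/(Mn)) Σ_m Σ_j f_m^j is μ-strongly convex with unique minimizer x*
    (fbar : EuclideanSpace ℝ (Fin d) → ℝ)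
    (hfbar : fbar = fun x => ((M : ℝ) * n)⁻¹ * ∑ m, ∑ j, f m j x)
    (xstar : EuclideanSpace ℝ (Fin d))
    (hmin : ∀ y, fbar xstar ≤ fbar y)
    -- round t : current point `xt`, fixed permutations `π`, deterministic local steps
    (γ : ℝ) (hγ : 0 < γ)
    (xt : EuclideanSpace ℝ (Fin d)) (π : Fin M → Equiv.Perm (Fin n))
    (y : Fin M → ℕ → EuclideanSpace ℝ (Fin d))
    (hy0 : ∀ m, y m 0 = xt)
    (hystep : ∀ m (i : Fin n), y m ((i : ℕ) + 1) = y m i - γ • g m (π m i) (y m i))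
    -- fresh, independent compression randomness of the M workers at round t
    {Ω : Type*} [MeasurableSpace Ω] (P : Measure Ω) [IsProbabilityMeasure P]
    (q : Fin M → Ω → EuclideanSpace ℝ (Fin d))
    (hqmem : ∀ m, MemLp (q m) 2 P)
    (hqindep : iIndepFun
      (m := fun _ : Fin M => (inferInstance : MeasurableSpace (EuclideanSpace ℝ (Fin d)))) q P)
    (zeta2 : ℝ)
    (hzeta2 : zeta2 = (M : ℝ)⁻¹ * ∑ m, ‖(n : ℝ)⁻¹ • ∑ j, g m j xstar‖ ^ 2)
    -- `q m` is the compressor output `Q(g_{t,m})` (unbiased, relative variance `omg`)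
    (hqmean : ∀ m, ∫ w, q m w ∂P = ((γ * n)⁻¹ : ℝ) • (xt - y m n))
    (hqvar : ∀ m, ∫ w, ‖q m w - (((γ * n)⁻¹ : ℝ) • (xt - y m n))‖ ^ 2 ∂P ≤ omg * ‖((γ * n)⁻¹ : ℝ) • (xt - y m n)‖ ^ 2)
    :
    ∫ w, ‖(M : ℝ)⁻¹ • ∑ m, q m w‖ ^ 2 ∂P
      ≤ 2 * Lmax ^ 2 * (1 + omg / M) / (M * n) * ∑ m, ∑ i : Fin n, ‖y m (i : ℕ) - xt‖ ^ 2
        + 8 * Lmax * (1 + omg / M) * (fbar xt - fbar xstar)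
        + 4 * omg / M * zeta2 := by
  subst hfbar hzeta2
  -- `b m = g_{t,m}`, `c m = ∇f_m(x_t)`, `s m = ∇f_m(x*)`
  set b := fun m => (n : ℝ)⁻¹ • ∑ i : Fin n, g m (π m i) (y m i)
  set c := fun m => (n : ℝ)⁻¹ • ∑ j, g m j xt
  set s := fun m => (n : ℝ)⁻¹ • ∑ j, g m j xstar
  have hb : ∀ m, ((γ * n)⁻¹ : ℝ) • (xt - y m n) = b m := fun m =>
    hy0 m ▸ smul_sub_eq_average_of_steps hγ.ne' (hystep m)
  have hsum0 : ∑ m, ∑ j, g m j xstar = 0 :=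
    sum_sum_gradient_eq_zero_of_forall_le (by positivity) (fun m j => hgrad m j xstar) hmin
  have hU : ∑ m, ‖b m - c m‖ ^ 2
      ≤ Lmax ^ 2 * ((n : ℝ)⁻¹ * ∑ m, ∑ i : Fin n, ‖y m i - xt‖ ^ 2) := by
    rw [mul_sum, mul_sum]
    exact sum_le_sum fun m _ =>
      norm_average_perm_sub_average_sq_le (g m) (hsmooth m) (π m) (fun i => y m i) xt
  have hV := sum_norm_average_gradient_sub_sq_le hgrad hconv hsmooth xt xstar hsum0
  have hsplit := mul_sum_norm_sq_add_norm_sum_sq_le homg.le (fun m => b m - c m)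
    (fun m => c m - s m) s (by simp only [s, ← smul_sum, hsum0, smul_zero])
  simp only [sub_add_sub_cancel, sub_add_cancel, Fintype.card_fin] at hsplit
  calc _ ≤ (M : ℝ)⁻¹ ^ 2 * (omg * ∑ m, ‖b m‖ ^ 2 + ‖∑ m, b m‖ ^ 2) :=
        integral_norm_smul_sum_sq_le hqmem (fun _ _ hij => hqindep.indepFun hij)
          (fun m => (hqmean m).trans (hb m)) (fun m => hb m ▸ hqvar m) _
    _ ≤ (M : ℝ)⁻¹ ^ 2 * ((omg + M) *
          (2 * (Lmax ^ 2 * ((n : ℝ)⁻¹ * ∑ m, ∑ i : Fin n, ‖y m i - xt‖ ^ 2))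
            + 4 * (2 * Lmax * ((n : ℝ)⁻¹ * (∑ m, ∑ j, f m j xt - ∑ m, ∑ j, f m j xstar))))
          + 4 * omg * ∑ m, ‖s m‖ ^ 2) := by
        refine mul_le_mul_of_nonneg_left (hsplit.trans ?_) (by positivity)
        gcongr
    _ = _ := by
        simp only [s]
        field_simp
        ring

/-- **second-moment bound for the Q-NASTYA server estimator.**
Here `q m` is the compressed local update `Q(g_{t,m})` of worker `m`, with
`g_{t,m} = (x_t − x_{t,m}^n)/(γn)`, and `g_t = (1/M) Σ_m q m`.  -/
theorem q_nastya_second_moment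
    {d M n : ℕ} (hM : 0 < M) (hn : 0 < n)
    (f : Fin M → Fin n → EuclideanSpace ℝ (Fin d) → ℝ)
    (g : Fin M → Fin n → EuclideanSpace ℝ (Fin d) → EuclideanSpace ℝ (Fin d))
    (hgrad : ∀ m i x, HasGradientAt (f m i) (g m i x) x)
    (hconv : ∀ m i, ConvexOn ℝ Set.univ (f m i))
    (Lmax : ℝ)
    (hsmooth : ∀ m i x y, ‖g m i x - g m i y‖ ≤ Lmax * ‖x - y‖)
    (omg : ℝ) (homg : 0 < omg)
    -- f = (1/(Mn)) Σ_m Σ_j f_m^j is μ-strongly convex with unique minimizer x*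
    (μ : ℝ) (hμ : 0 < μ)
    (fbar : EuclideanSpace ℝ (Fin d) → ℝ)
    (hfbar : fbar = fun x => ((M : ℝ) * n)⁻¹ * ∑ m, ∑ j, f m j x)
    (hsc : StrongConvexOn Set.univ μ fbar)
    (xstar : EuclideanSpace ℝ (Fin d))
    (hmin : ∀ y, fbar xstar ≤ fbar y)
    (huniq : ∀ y, (∀ z, fbar y ≤ fbar z) → y = xstar)
    -- round t : current point `xt`, fixed permutations `π`, deterministic local steps
    (γ : ℝ) (hγ : 0 < γ)
    (xt : EuclideanSpace ℝ (Fin d)) (π : Fin M → Equiv.Perm (Fin n))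
    (y : Fin M → ℕ → EuclideanSpace ℝ (Fin d))
    (hy0 : ∀ m, y m 0 = xt)
    (hystep : ∀ m (i : Fin n), y m ((i : ℕ) + 1) = y m i - γ • g m (π m i) (y m i))
    -- fresh, independent compression randomness of the M workers at round t
    {Ω : Type*} [MeasurableSpace Ω] (P : Measure Ω) [IsProbabilityMeasure P]
    (q : Fin M → Ω → EuclideanSpace ℝ (Fin d))
    (hqmem : ∀ m, MemLp (q m) 2 P)
    (hqindep : iIndepFun
      (m := fun _ : Fin M => (inferInstance : MeasurableSpace (EuclideanSpace ℝ (Fin d)))) q P)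
    (zeta2 : ℝ)
    (hzeta2 : zeta2 = (M : ℝ)⁻¹ * ∑ m, ‖(n : ℝ)⁻¹ • ∑ j, g m j xstar‖ ^ 2)
    -- `q m` is the compressor output `Q(g_{t,m})` (unbiased, relative variance `omg`)
    (hqmean : ∀ m, ∫ w, q m w ∂P = ((γ * n)⁻¹ : ℝ) • (xt - y m n))
    (hqvar : ∀ m, ∫ w, ‖q m w - (((γ * n)⁻¹ : ℝ) • (xt - y m n))‖ ^ 2 ∂P ≤ omg * ‖((γ * n)⁻¹ : ℝ) • (xt - y m n)‖ ^ 2)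
    :
    ∫ w, ‖(M : ℝ)⁻¹ • ∑ m, q m w‖ ^ 2 ∂P
      ≤ 2 * Lmax ^ 2 * (1 + omg / M) / (M * n) * ∑ m, ∑ i : Fin n, ‖y m (i : ℕ) - xt‖ ^ 2
        + 8 * Lmax * (1 + omg / M) * (fbar xt - fbar xstar)
        + 4 * omg / M * zeta2 :=
  q_nastya_second_moment_general hM hn f g hgrad hconv Lmax hsmooth omg homg fbar hfbar xstar hmin γ
    hγ xt π y hy0 hystep P q hqmem hqindep zeta2 hzeta2 hqmean hqvar
end
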